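/- arXiv:2605.24289 — 5 statements merged into one kernel-verified Lean document; each statement's English description precedes it below -/
import Mathlib

section
/- Suppose the conductance values satisfy g{i,j} ≥ 0 for every edge of G, the potential function φ satisfies the boundary conditions φ(vIN) = N − 1 and φ(vOUT) = 0, φ satisfies the Kirchhoff equation at every vertex i ∉ {vIN, vOUT}, and the penalties vanish: O(vOUT) = 0, O(i) = 1 for every vertex i ≠ vOUT, and B(i) = 0 for every vertex i. Then the absolute current support is exactly the edge set of a Hamiltonian path in G from vIN to vOUT. -/
/-! Call `i → j` a flow step when `G.Adj i j` and `0 < J i j`. Vanishing branching penalty and unit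
out-flow give every vertex other than `vOUT` exactly one outgoing flow step, carrying current `1`,
and `vOUT` none. By Kirchhoff's law the in-flow at an interior vertex is then `1`, so it has at
most one incoming flow step; since `vIN` and `vOUT` have degree one, `vIN` has none and `vOUT` at
most one. The potential strictly decreases along flow steps, so following them from any vertex
reaches `vOUT` without repeating a vertex, and uniqueness of predecessors forces each such chain
to run into the one starting at `vIN`. That chain is a Hamiltonian path, and its edges are exactly
the flow steps. -/

open Finset

namespace Finset

variable {ι 𝕜 : Type*} [CommRing 𝕜] [LinearOrder 𝕜] {s : Finset ι} {x : ι → 𝕜} {a b : ι}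

lemma exists_pos_of_sum_max_ne_zero (h : ∑ k ∈ s, max (x k) 0 ≠ 0) : ∃ a ∈ s, 0 < x a := by
  obtain ⟨a, ha, hxa⟩ := exists_ne_zero_of_sum_ne_zero h
  exact ⟨a, ha, not_le.1 fun hle => hxa (max_eq_right hle)⟩

variable [IsStrictOrderedRing 𝕜]

lemma eq_of_sum_offDiag_max_mul_max_eq_zero
    (h : ∑ p ∈ s.offDiag, max (x p.1) 0 * max (x p.2) 0 = 0)
    (ha : a ∈ s) (hb : b ∈ s) (hxa : 0 < x a) (hxb : 0 < x b) : a = b := by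
  by_contra hab
  have hterm := (sum_eq_zero_iff_of_nonneg fun p _ =>
    mul_nonneg (le_max_right (x p.1) 0) (le_max_right (x p.2) 0)).1 h (a, b)
    (mem_offDiag.2 ⟨ha, hb, hab⟩)
  rw [max_eq_left hxa.le, max_eq_left hxb.le] at hterm
  exact (mul_pos hxa hxb).ne' hterm

lemma eq_one_of_sum_max_eq_one
    (hB : ∑ p ∈ s.offDiag, max (x p.1) 0 * max (x p.2) 0 = 0)
    (hO : ∑ k ∈ s, max (x k) 0 = 1) (ha : a ∈ s) (hxa : 0 < x a) : x a = 1 := by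
  rwa [sum_eq_single_of_mem a ha fun k hk hka => max_eq_right <| not_lt.1 fun hxk =>
    hka (eq_of_sum_offDiag_max_mul_max_eq_zero hB hk ha hxk hxa), max_eq_left hxa.le] at hO

lemma nonpos_of_sum_max_eq_zero (h : ∑ k ∈ s, max (x k) 0 = 0) (ha : a ∈ s) : x a ≤ 0 :=
  max_eq_right_iff.1 <|
    (sum_eq_zero_iff_of_nonneg fun k _ => le_max_right (x k) 0).1 h a ha

lemma eq_of_sum_eq_zero_of_sum_max_lt_two [DecidableEq ι] (hsum : ∑ k ∈ s, x k = 0)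
    (hout : ∑ k ∈ s, max (x k) 0 < 2) (ha : a ∈ s) (hb : b ∈ s) (hxa : x a = -1)
    (hxb : x b = -1) : a = b := by
  by_contra hab
  have hin : ∑ k ∈ s, max (-x k) 0 = ∑ k ∈ s, max (x k) 0 - ∑ k ∈ s, x k := by
    rw [← sum_sub_distrib]
    refine sum_congr rfl fun k _ => ?_
    rcases le_total (x k) 0 with hk | hk
    · rw [max_eq_left (neg_nonneg.2 hk), max_eq_right hk, zero_sub]
    · rw [max_eq_right (neg_nonpos.2 hk), max_eq_left hk, sub_self]
  have htwo : max (-x a) 0 + max (-x b) 0 ≤ ∑ k ∈ s, max (-x k) 0 := by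
    rw [← sum_pair (f := fun k => max (-x k) 0) hab]
    exact sum_le_sum_of_subset_of_nonneg (insert_subset ha (singleton_subset_iff.2 hb))
      fun k _ _ => le_max_right _ _
  rw [hin, hsum, hxa, hxb, neg_neg, max_eq_left zero_le_one] at htwo
  linarith

end Finset

lemma SimpleGraph.eq_of_degree_eq_one {V : Type*} {G : SimpleGraph V} {v a b : V}
    [Fintype (G.neighborSet v)] (hv : G.degree v = 1) (ha : G.Adj v a) (hb : G.Adj v b) :
    a = b :=
  card_le_one.1 (G.card_neighborFinset_eq_degree v ▸ hv.le) a (by simpa using ha) b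
    (by simpa using hb)

namespace SimpleGraph.Walk

variable {V : Type*} {G : SimpleGraph V} {R : V → V → Prop}

def Follows (R : V → V → Prop) {u v : V} (p : G.Walk u v) : Prop :=
  ∀ d ∈ p.darts, R d.fst d.snd

@[simp]
lemma follows_nil {u : V} : (nil : G.Walk u u).Follows R := by
  simp [Follows]

@[simp]
lemma follows_cons {u v w : V} {h : G.Adj u v} {p : G.Walk v w} :
    (cons h p).Follows R ↔ R u v ∧ p.Follows R := by
  simp [Follows]

lemma exists_dart_fst_eq {u v w : V} (p : G.Walk u v) (hw : w ∈ p.support) (hwv : w ≠ v) :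
    ∃ d ∈ p.darts, d.fst = w := by
  rw [← p.map_fst_darts_append] at hw
  simpa [hwv] using hw

lemma exists_dart_snd_eq {u v w : V} (p : G.Walk u v) (hw : w ∈ p.support) (hwu : w ≠ u) :
    ∃ d ∈ p.darts, d.snd = w := by
  rw [← p.cons_map_snd_darts] at hw
  simpa [hwu] using hw

lemma Follows.mem_support_of_follows {s t : V} {p : G.Walk s t} (hp : p.Follows R)
    (hpred_unique : ∀ i j k, R i k → R j k → i = j) (hs : ∀ i, ¬ R i s) :
    ∀ {w b : V} (q : G.Walk w b), q.Follows R → b ∈ p.support → w ∈ p.support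
  | _, _, nil, _, hb => hb
  | _, _, cons h q, hq, hb => by
    rw [follows_cons] at hq
    have hy := hp.mem_support_of_follows hpred_unique hs q hq.2 hb
    obtain ⟨d, hd, rfl⟩ := p.exists_dart_snd_eq hy (by rintro rfl; exact hs _ hq.1)
    rw [hpred_unique _ _ _ hq.1 (hp d hd)]
    exact p.dart_fst_mem_support_of_mem_darts hd

lemma Follows.mk_mem_edges_iff {s t : V} {p : G.Walk s t} (hp : p.Follows R)
    (hsucc_unique : ∀ i j k, R i j → R i k → j = k) (ht : ∀ j, ¬ R t j)
    (hmem : ∀ w, w ∈ p.support) (i j : V) :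
    s(i, j) ∈ p.edges ↔ R i j ∨ R j i := by
  have mem_edges_of_rel : ∀ i j, R i j → s(i, j) ∈ p.edges := by
    intro i j hij
    obtain ⟨d, hd, rfl⟩ := p.exists_dart_fst_eq (hmem i) (by rintro rfl; exact ht _ hij)
    rw [hsucc_unique _ _ _ hij (hp d hd)]
    exact List.mem_map_of_mem hd
  refine ⟨fun he => ?_, fun hij => ?_⟩
  · obtain ⟨d, hd, hde⟩ := List.mem_map.1 he
    rcases dart_edge_eq_mk'_iff'.1 hde with ⟨rfl, rfl⟩ | ⟨rfl, rfl⟩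
    exacts [.inl (hp d hd), .inr (hp d hd)]
  · rcases hij with hij | hji
    exacts [mem_edges_of_rel i j hij, Sym2.eq_swap ▸ mem_edges_of_rel j i hji]

section Descending

variable {α : Type*} [Preorder α] {f : V → α}

lemma Follows.apply_le_of_mem_support (hf : ∀ i j, R i j → f j < f i) :
    ∀ {u v : V} {p : G.Walk u v}, p.Follows R → ∀ w ∈ p.support, f w ≤ f u
  | _, _, nil, _, w, hw => by rw [mem_support_nil_iff.1 hw]
  | _, _, cons h p, hp, w, hw => by
    rw [follows_cons] at hp
    rcases List.mem_cons.1 (support_cons h p ▸ hw) with rfl | hw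
    · exact le_rfl
    · exact (hp.2.apply_le_of_mem_support hf w hw).trans (hf _ _ hp.1).le

lemma Follows.support_nodup (hf : ∀ i j, R i j → f j < f i) :
    ∀ {u v : V} {p : G.Walk u v}, p.Follows R → p.support.Nodup
  | _, _, nil, _ => by simp
  | _, _, cons h p, hp => by
    rw [follows_cons] at hp
    rw [support_cons, List.nodup_cons]
    exact ⟨fun hu => (hp.2.apply_le_of_mem_support hf _ hu).not_gt (hf _ _ hp.1),
      hp.2.support_nodup hf⟩

lemma exists_follows [Finite V] {t : V} (hadj : ∀ i j, R i j → G.Adj i j)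
    (hf : ∀ i j, R i j → f j < f i) (hsucc : ∀ i, i ≠ t → ∃ j, R i j) (v : V) :
    ∃ p : G.Walk v t, p.Follows R := by
  induction v using (Finite.wellFounded_of_trans_of_irrefl (InvImage (· < ·) f)).induction with
  | _ v ih =>
  by_cases hv : v = t
  · subst hv
    exact ⟨nil, follows_nil⟩
  · obtain ⟨w, hw⟩ := hsucc v hv
    obtain ⟨p, hp⟩ := ih w (hf v w hw)
    exact ⟨cons (hadj v w hw) p, follows_cons.2 ⟨hw, hp⟩⟩

theorem exists_isHamiltonian_follows [Finite V] [DecidableEq V] {s t : V}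
    (hadj : ∀ i j, R i j → G.Adj i j) (hf : ∀ i j, R i j → f j < f i)
    (hsucc : ∀ i, i ≠ t → ∃ j, R i j) (hsucc_unique : ∀ i j k, R i j → R i k → j = k)
    (hpred_unique : ∀ i j k, R i k → R j k → i = j)
    (hs : ∀ i, ¬ R i s) (ht : ∀ j, ¬ R t j) :
    ∃ p : G.Walk s t, p.IsHamiltonian ∧ ∀ i j, s(i, j) ∈ p.edges ↔ R i j ∨ R j i := by
  obtain ⟨p, hp⟩ := exists_follows hadj hf hsucc s
  have hmem : ∀ w, w ∈ p.support := fun w =>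
    have ⟨q, hq⟩ := exists_follows hadj hf hsucc w
    hp.mem_support_of_follows hpred_unique hs q hq p.end_mem_support
  exact ⟨p, (IsPath.mk' (hp.support_nodup hf)).isHamiltonian_of_mem hmem,
    hp.mk_mem_edges_iff hsucc_unique ht hmem⟩

end Descending

end SimpleGraph.Walk

theorem zero_penalty_structure_general
    {V : Type*} [Fintype V] [DecidableEq V]
    (G : SimpleGraph V) [DecidableRel G.Adj]
    (vIN vOUT : V) (hne : vIN ≠ vOUT)
    (hdegIN : G.degree vIN = 1) (hdegOUT : G.degree vOUT = 1)
    -- conductance configuration, nonnegative on every edge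
    (g : Sym2 V → ℝ) (hg : ∀ e ∈ G.edgeSet, 0 ≤ g e)
    -- potential with the boundary conditions
    (φ : V → ℝ)
    -- directed currents via Ohm's law
    (J : V → V → ℝ) (hJ : ∀ i j, J i j = g s(i, j) * (φ i - φ j))
    -- Kirchhoff equation at every non-terminal vertex
    (hKirchhoff : ∀ i, i ≠ vIN → i ≠ vOUT → ∑ j ∈ G.neighborFinset i, J i j = 0)
    -- out-flow
    (O : V → ℝ) (hO : ∀ i, O i = ∑ j ∈ G.neighborFinset i, max (J i j) 0)
    -- local branching penalty (sum over unordered pairs of distinct neighbors)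
    (B : V → ℝ)
    (hB : ∀ i, B i =
      (1 / 2) * ∑ p ∈ (G.neighborFinset i).offDiag, max (J i p.1) 0 * max (J i p.2) 0)
    -- vanishing of the penalties
    (hOout : O vOUT = 0) (hOone : ∀ i, i ≠ vOUT → O i = 1)
    (hBzero : ∀ i, B i = 0) :
    ∃ p : G.Walk vIN vOUT, p.IsHamiltonian ∧
      ∀ i j, G.Adj i j → (J i j ≠ 0 ↔ s(i, j) ∈ p.edges) := by
  have hanti : ∀ i j, J j i = -J i j := fun i j => by rw [hJ, hJ, Sym2.eq_swap]; ring
  have hbranch : ∀ i, ∑ p ∈ (G.neighborFinset i).offDiag,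
      max (J i p.1) 0 * max (J i p.2) 0 = 0 := fun i => by
    simpa [hB] using hBzero i
  let R : V → V → Prop := fun i j => G.Adj i j ∧ 0 < J i j
  have hdesc : ∀ i j, R i j → φ j < φ i := fun i j h =>
    sub_pos.1 (pos_of_mul_pos_right (hJ i j ▸ h.2) (hg _ h.1))
  have hsucc_unique : ∀ i j k, R i j → R i k → j = k := fun i j k hj hk =>
    eq_of_sum_offDiag_max_mul_max_eq_zero (hbranch i) (by simpa using hj.1) (by simpa using hk.1)
      hj.2 hk.2
  have hunit : ∀ i j, i ≠ vOUT → R i j → J i j = 1 := fun i j hi h =>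
    eq_one_of_sum_max_eq_one (hbranch i) (hO i ▸ hOone i hi) (by simpa using h.1) h.2
  have hsucc : ∀ i, i ≠ vOUT → ∃ j, R i j := fun i hi => by
    obtain ⟨j, hj, hJj⟩ := exists_pos_of_sum_max_ne_zero (hO i ▸ hOone i hi ▸ one_ne_zero)
    exact ⟨j, by simpa using hj, hJj⟩
  have ht : ∀ j, ¬ R vOUT j := fun j h =>
    h.2.not_ge (nonpos_of_sum_max_eq_zero (hO vOUT ▸ hOout) (by simpa using h.1))
  have hs : ∀ i, ¬ R i vIN := fun i h => by
    obtain ⟨j, hj⟩ := hsucc vIN hne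
    have hji : j = i := G.eq_of_degree_eq_one hdegIN hj.1 h.1.symm
    linarith [hanti vIN i, hji ▸ hj.2, h.2]
  have hpred_unique : ∀ i j k, R i k → R j k → i = j := fun i j k hi hj => by
    by_cases hk : k = vOUT
    · exact G.eq_of_degree_eq_one (hk ▸ hdegOUT) hi.1.symm hj.1.symm
    have hkIN : k ≠ vIN := by rintro rfl; exact hs i hi
    have hin : ∀ l, R l k → J k l = -1 := fun l hl => by
      rw [hanti, hunit l k (by rintro rfl; exact ht k hl) hl]
    exact eq_of_sum_eq_zero_of_sum_max_lt_two (hKirchhoff k hkIN hk)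
      (by rw [← hO, hOone k hk]; norm_num) (by simpa using hi.1.symm) (by simpa using hj.1.symm)
      (hin i hi) (hin j hj)
  obtain ⟨p, hham, hedges⟩ := SimpleGraph.Walk.exists_isHamiltonian_follows
    (G := G) (fun _ _ h => h.1) hdesc hsucc hsucc_unique hpred_unique hs ht
  refine ⟨p, hham, fun i j hij => ?_⟩
  rw [hedges]
  simp only [R, hij, hij.symm, true_and, hanti i j, neg_pos]
  exact ne_iff_lt_or_gt.trans or_comm

/-- If the conductances are nonnegative, the potential satisfies the boundary
conditions and the Kirchhoff equations at all non-terminal vertices, and the out-flow and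
branching penalties vanish, then the absolute current support is exactly the edge set of a
Hamiltonian path in `G` from `vIN` to `vOUT`. -/
theorem zero_penalty_structure
    {V : Type*} [Fintype V] [DecidableEq V]
    (G : SimpleGraph V) [DecidableRel G.Adj]
    (N : ℕ) (hNcard : N = Fintype.card V) (hN3 : 3 ≤ N)
    (vIN vOUT : V) (hne : vIN ≠ vOUT)
    (hdegIN : G.degree vIN = 1) (hdegOUT : G.degree vOUT = 1)
    -- conductance configuration, nonnegative on every edge
    (g : Sym2 V → ℝ) (hg : ∀ e ∈ G.edgeSet, 0 ≤ g e)
    -- potential with the boundary conditions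
    (φ : V → ℝ) (hφIN : φ vIN = (N : ℝ) - 1) (hφOUT : φ vOUT = 0)
    -- directed currents via Ohm's law
    (J : V → V → ℝ) (hJ : ∀ i j, J i j = g s(i, j) * (φ i - φ j))
    -- Kirchhoff equation at every non-terminal vertex
    (hKirchhoff : ∀ i, i ≠ vIN → i ≠ vOUT → ∑ j ∈ G.neighborFinset i, J i j = 0)
    -- out-flow
    (O : V → ℝ) (hO : ∀ i, O i = ∑ j ∈ G.neighborFinset i, max (J i j) 0)
    -- local branching penalty (sum over unordered pairs of distinct neighbors)
    (B : V → ℝ)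
    (hB : ∀ i, B i =
      (1 / 2) * ∑ p ∈ (G.neighborFinset i).offDiag, max (J i p.1) 0 * max (J i p.2) 0)
    -- vanishing of the penalties
    (hOout : O vOUT = 0) (hOone : ∀ i, i ≠ vOUT → O i = 1)
    (hBzero : ∀ i, B i = 0) :
    ∃ p : G.Walk vIN vOUT, p.IsHamiltonian ∧
      ∀ i j, G.Adj i j → (J i j ≠ 0 ↔ s(i, j) ∈ p.edges) :=
  zero_penalty_structure_general G vIN vOUT hne hdegIN hdegOUT g hg φ J hJ hKirchhoff O hO B hB
    hOout hOone hBzero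
end

section
/- Suppose v_1, v_2, …, v_N is a Hamiltonian path in G with v_1 = vIN and v_N = vOUT. Define the conductance configuration g by g{e} = 1 if e is one of the path edges {v_k, v_{k+1}} (1 ≤ k ≤ N−1) and g{e} = 0 for every other edge of G, and define the potential function φ by φ(v_k) = N − k for 1 ≤ k ≤ N. Then: φ(vIN) = N − 1 and φ(vOUT) = 0; φ satisfies the Kirchhoff equation at every vertex i ∉ {vIN, vOUT}; the directed current satisfies J(v_k, v_{k+1}) = 1 for every 1 ≤ k ≤ N−1 and J(i,j) = 0 on every ordered pair along a non-path edge; and the penalties vanish: O(vOUT) = 0, O(i) = 1 for every vertex i ≠ vOUT, and B(i) = 0 for every vertex i. -/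
/-- Given a Hamiltonian path `v 0, v 1, …, v (N-1)` in `G` from `vIN` to `vOUT`
(0-indexed version of `v_1, …, v_N`), the conductance configuration equal to `1` on the path
edges and `0` on all other edges, together with the potential `φ (v k) = N - 1 - k`, satisfies
the boundary conditions, the Kirchhoff equations at all non-terminal vertices, carries unit
current along each path arc and zero current on all other edges, and makes all the penalties
vanish. -/
theorem hamiltonian_path_gives_zero_penalty
    {V : Type*} [Fintype V] [DecidableEq V]
    (G : SimpleGraph V) [DecidableRel G.Adj]
    (N : ℕ) (hNcard : N = Fintype.card V) (hN3 : 3 ≤ N)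
    (vIN vOUT : V) (hne : vIN ≠ vOUT)
    (hdegIN : G.degree vIN = 1) (hdegOUT : G.degree vOUT = 1)
    -- the Hamiltonian path, enumerated as v 0, v 1, …, v (N-1)
    (v : ℕ → V)
    (hinj : ∀ k l, k < N → l < N → v k = v l → k = l)
    (hsurj : ∀ x : V, ∃ k < N, v k = x)
    (hadj : ∀ k, k + 1 < N → G.Adj (v k) (v (k + 1)))
    (hstart : v 0 = vIN) (hend : v (N - 1) = vOUT)
    -- the conductance configuration: 1 on path edges, 0 on all other edges
    (g : Sym2 V → ℝ)
    (hg1 : ∀ k, k + 1 < N → g s(v k, v (k + 1)) = 1)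
    (hg0 : ∀ e ∈ G.edgeSet, (¬ ∃ k, k + 1 < N ∧ e = s(v k, v (k + 1))) → g e = 0)
    -- the potential function: φ (v k) = N - 1 - k
    (φ : V → ℝ) (hφ : ∀ k < N, φ (v k) = (N : ℝ) - 1 - (k : ℝ))
    -- directed currents via Ohm's law
    (J : V → V → ℝ) (hJ : ∀ i j, J i j = g s(i, j) * (φ i - φ j))
    -- out-flow
    (O : V → ℝ) (hO : ∀ i, O i = ∑ j ∈ G.neighborFinset i, max (J i j) 0)
    -- local branching penalty (sum over unordered pairs of distinct neighbors)
    (B : V → ℝ)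
    (hB : ∀ i, B i =
      (1 / 2) * ∑ p ∈ (G.neighborFinset i).offDiag, max (J i p.1) 0 * max (J i p.2) 0) :
    -- boundary conditions
    φ vIN = (N : ℝ) - 1 ∧ φ vOUT = 0 ∧
    -- Kirchhoff equations at non-terminal vertices
    (∀ i, i ≠ vIN → i ≠ vOUT → ∑ j ∈ G.neighborFinset i, J i j = 0) ∧
    -- unit current along path arcs
    (∀ k, k + 1 < N → J (v k) (v (k + 1)) = 1) ∧
    -- zero current on every ordered pair along a non-path edge
    (∀ i j, G.Adj i j → (¬ ∃ k, k + 1 < N ∧ s(i, j) = s(v k, v (k + 1))) → J i j = 0) ∧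
    -- vanishing of the penalties
    O vOUT = 0 ∧ (∀ i, i ≠ vOUT → O i = 1) ∧ (∀ i, B i = 0) := by

  have hN1 : 1 ≤ N := by omega
  -- characterization of currents out of v k
  have Jval : ∀ k, k < N → ∀ j, G.Adj (v k) j →
      J (v k) j = if k + 1 < N ∧ j = v (k + 1) then 1
        else if 0 < k ∧ j = v (k - 1) then -1 else 0 := by
    intro k hk j hadjj
    by_cases hp : ∃ m, m + 1 < N ∧ s(v k, j) = s(v m, v (m + 1))
    · obtain ⟨m, hm, heq⟩ := hp
      rw [Sym2.eq_iff] at heq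
      rcases heq with ⟨h1, h2⟩ | ⟨h1, h2⟩
      · have hkm : k = m := hinj k m hk (by omega) h1
        subst hkm
        subst h2
        rw [hJ, hg1 k hm, hφ k hk, hφ (k + 1) hm]
        rw [if_pos ⟨hm, rfl⟩]
        push_cast
        ring
      · have hkm : k = m + 1 := hinj k (m + 1) hk hm h1
        subst h2
        have hc1 : ¬ (k + 1 < N ∧ v m = v (k + 1)) := by
          rintro ⟨hlt, he⟩
          have := hinj m (k + 1) (by omega) hlt he
          omega
        have hc2 : 0 < k ∧ v m = v (k - 1) := by
          refine ⟨by omega, ?_⟩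
          congr 1
          omega
        rw [if_neg hc1, if_pos hc2, hJ]
        have hsw : s(v k, v m) = s(v m, v (m + 1)) := by
          rw [hkm]; exact Sym2.eq_swap
        rw [hsw, hg1 m hm, hkm, hφ (m + 1) (by omega), hφ m (by omega)]
        push_cast
        ring
    · have hgz : g s(v k, j) = 0 := hg0 _ (G.mem_edgeSet.mpr hadjj) hp
      have hc1 : ¬ (k + 1 < N ∧ j = v (k + 1)) := by
        rintro ⟨hlt, he⟩
        exact hp ⟨k, hlt, by rw [he]⟩
      have hc2 : ¬ (0 < k ∧ j = v (k - 1)) := by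
        rintro ⟨hpos, he⟩
        refine hp ⟨k - 1, by omega, ?_⟩
        rw [he]
        have h1 : k - 1 + 1 = k := by omega
        rw [h1]
        exact Sym2.eq_swap
      rw [hJ, hgz, zero_mul, if_neg hc1, if_neg hc2]
  -- positive current forces next-vertex
  have Jpos : ∀ k, k < N → ∀ j, G.Adj (v k) j → 0 < J (v k) j →
      k + 1 < N ∧ j = v (k + 1) := by
    intro k hk j hadjj hpos
    rw [Jval k hk j hadjj] at hpos
    by_cases h1 : k + 1 < N ∧ j = v (k + 1)
    · exact h1
    · rw [if_neg h1] at hpos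
      by_cases h2 : 0 < k ∧ j = v (k - 1)
      · rw [if_pos h2] at hpos; norm_num at hpos
      · rw [if_neg h2] at hpos; norm_num at hpos
  refine ⟨?_, ?_, ?_, ?_, ?_, ?_, ?_, ?_⟩
  · rw [← hstart, hφ 0 (by omega)]
    norm_num
  · rw [← hend, hφ (N - 1) (by omega), Nat.cast_sub hN1]
    norm_num
  · -- Kirchhoff
    intro i hi1 hi2
    obtain ⟨k, hk, rfl⟩ := hsurj i
    have hk0 : k ≠ 0 := by rintro rfl; exact hi1 hstart
    have hkN : k ≠ N - 1 := by rintro rfl; exact hi2 hend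
    have hk1 : k + 1 < N := by omega
    have hkpos : 0 < k := Nat.pos_of_ne_zero hk0
    have ha : v (k + 1) ∈ G.neighborFinset (v k) := by
      rw [SimpleGraph.mem_neighborFinset]; exact hadj k hk1
    have hb : v (k - 1) ∈ G.neighborFinset (v k) := by
      rw [SimpleGraph.mem_neighborFinset]
      have h := hadj (k - 1) (by omega)
      have h1 : k - 1 + 1 = k := by omega
      rw [h1] at h
      exact h.symm
    have hne2 : v (k + 1) ≠ v (k - 1) := by
      intro he
      have := hinj (k + 1) (k - 1) hk1 (by omega) he
      omega
    have hsum : ∑ j ∈ G.neighborFinset (v k), J (v k) j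
        = ∑ j ∈ G.neighborFinset (v k),
          ((if j = v (k + 1) then (1 : ℝ) else 0)
            + (if j = v (k - 1) then (-1 : ℝ) else 0)) := by
      refine Finset.sum_congr rfl fun j hj => ?_
      rw [SimpleGraph.mem_neighborFinset] at hj
      rw [Jval k hk j hj]
      by_cases h1 : j = v (k + 1)
      · have h2 : ¬ j = v (k - 1) := by rw [h1]; exact hne2
        simp [h1, h2, hk1, hne2]
      · by_cases h2 : j = v (k - 1)
        · simp [h1, h2, hkpos, Ne.symm hne2]
        · simp [h1, h2]
    rw [hsum, Finset.sum_add_distrib, Finset.sum_ite_eq' _ (v (k + 1)),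
      Finset.sum_ite_eq' _ (v (k - 1)), if_pos ha, if_pos hb]
    norm_num
  · -- unit current
    intro k hk1
    rw [Jval k (by omega) _ (hadj k hk1), if_pos ⟨hk1, rfl⟩]
  · -- zero current on non-path edges
    intro i j hij hnp
    rw [hJ, hg0 _ (G.mem_edgeSet.mpr hij) hnp, zero_mul]
  · -- O vOUT = 0
    rw [hO]
    refine Finset.sum_eq_zero fun j hj => ?_
    rw [SimpleGraph.mem_neighborFinset] at hj
    rw [← hend] at hj
    rw [← hend, Jval (N - 1) (by omega) j hj]
    have hc1 : ¬ (N - 1 + 1 < N ∧ j = v (N - 1 + 1)) := by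
      rintro ⟨hlt, -⟩; omega
    rw [if_neg hc1]
    by_cases h2 : 0 < N - 1 ∧ j = v (N - 1 - 1)
    · rw [if_pos h2]; norm_num
    · rw [if_neg h2]; norm_num
  · -- O i = 1 for i ≠ vOUT
    intro i hi
    obtain ⟨k, hk, rfl⟩ := hsurj i
    have hkN : k ≠ N - 1 := by rintro rfl; exact hi hend
    have hk1 : k + 1 < N := by omega
    have ha : v (k + 1) ∈ G.neighborFinset (v k) := by
      rw [SimpleGraph.mem_neighborFinset]; exact hadj k hk1
    rw [hO]
    rw [Finset.sum_eq_single_of_mem (v (k + 1)) ha]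
    · rw [Jval k hk _ (hadj k hk1), if_pos ⟨hk1, rfl⟩]
      norm_num
    · intro j hj hjne
      rw [SimpleGraph.mem_neighborFinset] at hj
      rw [Jval k hk j hj, if_neg (by rintro ⟨-, he⟩; exact hjne he)]
      by_cases h2 : 0 < k ∧ j = v (k - 1)
      · rw [if_pos h2]; norm_num
      · rw [if_neg h2]; norm_num
  · -- B i = 0
    intro i
    obtain ⟨k, hk, rfl⟩ := hsurj i
    rw [hB]
    have hz : ∑ p ∈ (G.neighborFinset (v k)).offDiag,
        max (J (v k) p.1) 0 * max (J (v k) p.2) 0 = 0 := by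
      refine Finset.sum_eq_zero fun p hp => ?_
      rw [Finset.mem_offDiag] at hp
      obtain ⟨hp1, hp2, hpne⟩ := hp
      rw [SimpleGraph.mem_neighborFinset] at hp1 hp2
      by_cases h1 : 0 < J (v k) p.1
      · by_cases h2 : 0 < J (v k) p.2
        · obtain ⟨hlt, he1⟩ := Jpos k hk p.1 hp1 h1
          obtain ⟨-, he2⟩ := Jpos k hk p.2 hp2 h2
          exact absurd (he1.trans he2.symm) hpne
        · rw [max_eq_right (le_of_not_gt h2), mul_zero]
      · rw [max_eq_right (le_of_not_gt h1), zero_mul]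
    rw [hz, mul_zero]
end

section
/- Suppose the conductance values satisfy 0 ≤ g{i,j} ≤ 1 for every edge of G, the potential function φ satisfies the boundary conditions φ(vIN) = N − 1 and φ(vOUT) = 0, φ satisfies the Kirchhoff equation at every vertex i ∉ {vIN, vOUT}, and the penalties vanish: O(vOUT) = 0, O(i) = 1 for every vertex i ≠ vOUT, and B(i) = 0 for every vertex i. Then g takes only the values 0 and 1, and the set of edges e with g{e} = 1 is exactly the edge set of a Hamiltonian path in G from vIN to vOUT; moreover, along each arc of this path (oriented from vIN toward vOUT) the potential drops by exactly 1 and the directed current equals 1. -/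
/-!
The vanishing of the out-flow and branching penalties forces every vertex other than `vOUT` to
push a current of exactly `1` along a single edge, to a successor `s v`, and forbids positive
currents on all other edges. As conductances are at most `1`, the potential drops by at least `1`
from `v` to `s v`, so following successors from `vIN` reaches `vOUT` without repetition. Kirchhoff's
law gives every interior vertex a predecessor; a vertex off this path of maximal potential would
have its predecessor on the path, hence would lie on the path itself, so the path is Hamiltonian.
Its `N - 1` arcs then account for the whole drop `φ vIN - φ vOUT = N - 1`, so each arc drops by
exactly `1` and has conductance `1`. Any other edge carries no current in either direction between
distinct potentials, so its conductance is `0`.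
-/

open Finset

theorem wellFounded_lt_comp {α β : Type*} [Finite α] [Preorder β] (f : α → β) :
    WellFounded fun x y => f x < f y :=
  @Finite.wellFounded_of_trans_of_irrefl _ _ _ ⟨fun _ _ _ => lt_trans⟩
    ⟨fun _ => lt_irrefl _⟩

theorem one_le_of_mul_eq_one {α : Type*} [CommRing α] [LinearOrder α] [IsStrictOrderedRing α]
    {a b : α} (ha : 0 ≤ a) (ha1 : a ≤ 1) (h : a * b = 1) : 1 ≤ b := by
  have hb : 0 < b := by nlinarith
  nlinarith

theorem Finset.exists_eq_one_of_sum_max_eq_one {ι α : Type*} [DecidableEq ι] [CommRing α]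
    [LinearOrder α] [IsStrictOrderedRing α] {S : Finset ι} {x : ι → α}
    (hsum : ∑ i ∈ S, max (x i) 0 = 1)
    (hpair : ∑ p ∈ S.offDiag, max (x p.1) 0 * max (x p.2) 0 = 0) :
    ∃ j ∈ S, x j = 1 ∧ ∀ k ∈ S, 0 < x k → k = j := by
  obtain ⟨j, hjS, hj⟩ : ∃ j ∈ S, (0 : α) < max (x j) 0 :=
    exists_lt_of_sum_lt (by simp [hsum])
  have hjpos : 0 < x j := by simpa using hj
  have huniq : ∀ k ∈ S, 0 < x k → k = j := by
    intro k hkS hk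
    by_contra hkj
    have hzero := (sum_eq_zero_iff_of_nonneg fun p _ => by positivity).1 hpair (j, k)
      (mem_offDiag.2 ⟨hjS, hkS, Ne.symm hkj⟩)
    simp only [max_eq_left hjpos.le, max_eq_left hk.le] at hzero
    exact (mul_pos hjpos hk).ne' hzero
  refine ⟨j, hjS, ?_, huniq⟩
  rwa [sum_eq_single_of_mem j hjS fun k hkS hkj =>
    max_eq_right (not_lt.1 fun hk => hkj (huniq k hkS hk)), max_eq_left hjpos.le] at hsum

namespace SimpleGraph

variable {V : Type*} {G : SimpleGraph V}

namespace Walk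

theorem exists_mem_darts_fst_eq {u v x : V} (p : G.Walk u v) (hx : x ∈ p.support)
    (hxv : x ≠ v) :
    ∃ d ∈ p.darts, d.fst = x := by
  rw [← p.map_fst_darts_append] at hx
  simpa [hxv] using hx

theorem add_length_le {α : Type*} [Field α] [LinearOrder α] [IsStrictOrderedRing α]
    (φ : V → α) {u v : V} (p : G.Walk u v)
    (hp : ∀ d ∈ p.darts, φ d.snd + 1 ≤ φ d.fst) : φ v + p.length ≤ φ u := by
  induction p with
  | nil => simp
  | cons h q ih =>
    simp only [darts_cons, List.mem_cons, forall_eq_or_imp] at hp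
    have := ih hp.2
    simp only [length_cons, Nat.cast_add, Nat.cast_one]
    linarith [hp.1]

theorem sub_eq_one_of_add_length_eq {α : Type*} [Field α] [LinearOrder α]
    [IsStrictOrderedRing α] (φ : V → α) {u v : V} (p : G.Walk u v)
    (hp : ∀ d ∈ p.darts, φ d.snd + 1 ≤ φ d.fst) (heq : φ u = φ v + p.length) :
    ∀ d ∈ p.darts, φ d.fst - φ d.snd = 1 := by
  induction p with
  | nil => simp
  | cons h q ih =>
    simp only [darts_cons, List.mem_cons, forall_eq_or_imp] at hp ⊢
    have hq := q.add_length_le φ hp.2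
    simp only [length_cons, Nat.cast_add, Nat.cast_one] at heq
    exact ⟨by linarith [hp.1], ih hp.2 (by linarith [hp.1])⟩

variable [Finite V] {β : Type*} [Preorder β] {φ : V → β} {s : V → V} {t : V}

theorem exists_strictAnti_follows (hs : ∀ v, v ≠ t → G.Adj v (s v) ∧ φ (s v) < φ v)
    (v : V) :
    ∃ p : G.Walk v t, (p.support.map φ).Pairwise (· > ·) ∧
      ∀ d ∈ p.darts, d.fst ≠ t ∧ d.snd = s d.fst := by
  induction v using (wellFounded_lt_comp φ).induction with
  | _ v ih =>
  by_cases hv : v = t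
  · subst hv
    exact ⟨.nil, by simp, by simp⟩
  obtain ⟨hadj, hlt⟩ := hs v hv
  obtain ⟨q, hqφ, hqs⟩ := ih (s v) hlt
  have hle : ∀ w ∈ q.support, φ w ≤ φ (s v) := by
    rw [← cons_tail_support, List.map_cons, List.pairwise_cons] at hqφ
    rw [← cons_tail_support]
    simp only [List.mem_cons, forall_eq_or_imp, le_refl, true_and]
    exact fun w hw => (hqφ.1 _ (List.mem_map_of_mem hw)).le
  refine ⟨.cons hadj q, ?_, ?_⟩
  · simp only [support_cons, List.map_cons, List.pairwise_cons, List.mem_map]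
    exact ⟨fun _ ⟨w, hw, hφw⟩ => hφw ▸ (hle w hw).trans_lt hlt, hqφ⟩
  · simpa [hv] using hqs

theorem mem_support_of_follows {a : V} (p : G.Walk a t) (hp : ∀ d ∈ p.darts, d.snd = s d.fst)
    (hpred : ∀ w, w ≠ a → w ≠ t → ∃ j, j ≠ t ∧ s j = w ∧ φ w < φ j) (w : V) :
    w ∈ p.support := by
  induction w using (wellFounded_lt_comp (OrderDual.toDual ∘ φ)).induction with
  | _ w ih =>
  by_cases hwa : w = a
  · exact hwa ▸ p.start_mem_support
  by_cases hwt : w = t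
  · exact hwt ▸ p.end_mem_support
  obtain ⟨j, hjt, rfl, hlt⟩ := hpred w hwa hwt
  obtain ⟨d, hd, rfl⟩ := p.exists_mem_darts_fst_eq (ih j hlt) hjt
  exact hp d hd ▸ p.dart_snd_mem_support_of_mem_darts hd

end Walk

theorem exists_isHamiltonian_follows [Finite V] [DecidableEq V] {β : Type*} [Preorder β]
    {φ : V → β} {s : V → V} {t : V}
    (hs : ∀ v, v ≠ t → G.Adj v (s v) ∧ φ (s v) < φ v) (a : V)
    (hpred : ∀ w, w ≠ a → w ≠ t → ∃ j, j ≠ t ∧ s j = w) :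
    ∃ p : G.Walk a t, p.IsHamiltonian ∧ Function.Injective φ ∧
      ∀ d ∈ p.darts, d.fst ≠ t ∧ d.snd = s d.fst := by
  obtain ⟨p, hpφ, hps⟩ := Walk.exists_strictAnti_follows hs a
  have hsupp : ∀ v, v ∈ p.support := p.mem_support_of_follows (fun d hd => (hps d hd).2)
    fun w hwa hwt => by
      obtain ⟨j, hjt, rfl⟩ := hpred w hwa hwt
      exact ⟨j, hjt, rfl, (hs j hjt).2⟩
  have hnodup : (p.support.map φ).Nodup := hpφ.imp ne_of_gt
  exact ⟨p, (Walk.IsPath.mk' hnodup.of_map).isHamiltonian_of_mem hsupp,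
    fun v w h => List.inj_on_of_nodup_map hnodup (hsupp v) (hsupp w) h, hps⟩

variable (G) (J : V → V → ℝ) (t : V) (s : V → V)

structure IsUnitSuccessor : Prop where
  adj : ∀ v, v ≠ t → G.Adj v (s v)
  current_eq_one : ∀ v, v ≠ t → J v (s v) = 1
  ne_of_pos : ∀ v w, G.Adj v w → 0 < J v w → v ≠ t
  eq_of_pos : ∀ v w, G.Adj v w → 0 < J v w → w = s v

variable {G J t}

theorem exists_isUnitSuccessor [G.LocallyFinite] [DecidableEq V]
    (hout : ∀ v, v ≠ t → ∑ w ∈ G.neighborFinset v, max (J v w) 0 = 1)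
    (hbranch : ∀ v, v ≠ t →
      ∑ p ∈ (G.neighborFinset v).offDiag, max (J v p.1) 0 * max (J v p.2) 0 = 0)
    (hsink : ∑ w ∈ G.neighborFinset t, max (J t w) 0 = 0) :
    ∃ s, G.IsUnitSuccessor J t s := by
  have hsucc : ∀ v, ∃ w, v ≠ t →
      G.Adj v w ∧ J v w = 1 ∧ ∀ k, G.Adj v k → 0 < J v k → k = w := by
    intro v
    by_cases hv : v = t
    · exact ⟨v, fun h => absurd hv h⟩
    obtain ⟨w, hw, hJw, huniq⟩ := exists_eq_one_of_sum_max_eq_one (hout v hv) (hbranch v hv)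
    exact ⟨w, fun _ => ⟨(G.mem_neighborFinset v w).1 hw, hJw,
      fun k hk => huniq k ((G.mem_neighborFinset v k).2 hk)⟩⟩
  have hne : ∀ v w, G.Adj v w → 0 < J v w → v ≠ t := by
    rintro v w hvw hpos rfl
    have := (sum_eq_zero_iff_of_nonneg fun _ _ => le_max_right _ _).1 hsink w
      ((G.mem_neighborFinset v w).2 hvw)
    linarith [le_max_left (J v w) 0]
  choose s hs using hsucc
  exact ⟨s, fun v hv => (hs v hv).1, fun v hv => (hs v hv).2.1, hne,
    fun v w hvw hpos => (hs v (hne v w hvw hpos)).2.2 w hvw hpos⟩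

namespace IsUnitSuccessor

variable {s} {g : Sym2 V → ℝ} {φ : V → ℝ}

theorem add_one_le (hs : G.IsUnitSuccessor J t s) (hg0 : ∀ e ∈ G.edgeSet, 0 ≤ g e)
    (hg1 : ∀ e ∈ G.edgeSet, g e ≤ 1) (hJ : ∀ i j, J i j = g s(i, j) * (φ i - φ j))
    {v : V} (hv : v ≠ t) : φ (s v) + 1 ≤ φ v := by
  have hedge : s(v, s v) ∈ G.edgeSet := hs.adj v hv
  have h1 : g s(v, s v) * (φ v - φ (s v)) = 1 := (hJ v (s v)).symm.trans (hs.current_eq_one v hv)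
  linarith [one_le_of_mul_eq_one (hg0 _ hedge) (hg1 _ hedge) h1]

theorem exists_pred [G.LocallyFinite] (hs : G.IsUnitSuccessor J t s)
    (hanti : ∀ i j, J j i = -J i j) {w : V} (hkirch : ∑ j ∈ G.neighborFinset w, J w j = 0)
    (hout : ∑ j ∈ G.neighborFinset w, max (J w j) 0 = 1) :
    ∃ j, j ≠ t ∧ s j = w := by
  obtain ⟨j, hj, hlt⟩ := exists_lt_of_sum_lt (hkirch.trans_lt (by rw [hout]; exact one_pos))
  have hadj : G.Adj j w := ((G.mem_neighborFinset w j).1 hj).symm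
  have hpos : 0 < J j w := by
    rw [hanti]
    simpa [lt_max_iff] using hlt
  exact ⟨j, hs.ne_of_pos j w hadj hpos, (hs.eq_of_pos j w hadj hpos).symm⟩

theorem mk_mem_edges {a : V} (hs : G.IsUnitSuccessor J t s) {p : G.Walk a t}
    (hp : ∀ d ∈ p.darts, d.snd = s d.fst) (hsupp : ∀ v, v ∈ p.support) {v w : V}
    (hvw : G.Adj v w) (hpos : 0 < J v w) : s(v, w) ∈ p.edges := by
  obtain ⟨d, hd, rfl⟩ := p.exists_mem_darts_fst_eq (hsupp v) (hs.ne_of_pos v w hvw hpos)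
  rw [hs.eq_of_pos _ w hvw hpos, ← hp d hd]
  exact List.mem_map_of_mem hd

theorem eq_zero_of_not_mem_edges {a : V} (hs : G.IsUnitSuccessor J t s)
    (hJ : ∀ i j, J i j = g s(i, j) * (φ i - φ j)) (hφ : Function.Injective φ)
    {p : G.Walk a t} (hp : ∀ d ∈ p.darts, d.snd = s d.fst) (hsupp : ∀ v, v ∈ p.support)
    {e : Sym2 V} (he : e ∈ G.edgeSet) (hnot : e ∉ p.edges) : g e = 0 := by
  induction e using Sym2.ind with | _ v w =>
  have hvw : J v w ≤ 0 := not_lt.1 fun h => hnot (hs.mk_mem_edges hp hsupp he h)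
  have hwv : J w v ≤ 0 :=
    not_lt.1 fun h => hnot (Sym2.eq_swap ▸ hs.mk_mem_edges hp hsupp he.symm h)
  rw [hJ, Sym2.eq_swap] at hwv
  rw [hJ] at hvw
  have hsub : φ v - φ w ≠ 0 := sub_ne_zero.2 fun h => G.ne_of_adj he (hφ h)
  have hzero : g s(v, w) * (φ v - φ w) = 0 := by linarith
  exact (mul_eq_zero.1 hzero).resolve_right hsub

end IsUnitSuccessor

end SimpleGraph

open SimpleGraph

theorem global_minimizer_is_hamiltonian_path_general
    {V : Type*} [Fintype V] [DecidableEq V]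
    (G : SimpleGraph V) [DecidableRel G.Adj]
    (N : ℕ) (hNcard : N = Fintype.card V)
    (vIN vOUT : V)
    -- conductance configuration, with values in [0,1] on every edge
    (g : Sym2 V → ℝ) (hg0 : ∀ e ∈ G.edgeSet, 0 ≤ g e) (hg1 : ∀ e ∈ G.edgeSet, g e ≤ 1)
    -- potential with the boundary conditions
    (φ : V → ℝ) (hφIN : φ vIN = (N : ℝ) - 1) (hφOUT : φ vOUT = 0)
    -- directed currents via Ohm's law
    (J : V → V → ℝ) (hJ : ∀ i j, J i j = g s(i, j) * (φ i - φ j))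
    -- Kirchhoff equation at every non-terminal vertex
    (hKirchhoff : ∀ i, i ≠ vIN → i ≠ vOUT → ∑ j ∈ G.neighborFinset i, J i j = 0)
    -- out-flow
    (O : V → ℝ) (hO : ∀ i, O i = ∑ j ∈ G.neighborFinset i, max (J i j) 0)
    -- local branching penalty (sum over unordered pairs of distinct neighbors)
    (B : V → ℝ)
    (hB : ∀ i, B i =
      (1 / 2) * ∑ p ∈ (G.neighborFinset i).offDiag, max (J i p.1) 0 * max (J i p.2) 0)
    -- vanishing of the penalties
    (hOout : O vOUT = 0) (hOone : ∀ i, i ≠ vOUT → O i = 1)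
    (hBzero : ∀ i, B i = 0) :
    (∀ e ∈ G.edgeSet, g e = 0 ∨ g e = 1) ∧
    ∃ p : G.Walk vIN vOUT, p.IsHamiltonian ∧
      (∀ e ∈ G.edgeSet, g e = 1 ↔ e ∈ p.edges) ∧
      (∀ d ∈ p.darts, φ d.fst - φ d.snd = 1 ∧ J d.fst d.snd = 1) := by
  have hanti : ∀ i j, J j i = -J i j := fun i j => by rw [hJ, hJ, Sym2.eq_swap]; ring
  have hout : ∀ v, v ≠ vOUT → ∑ w ∈ G.neighborFinset v, max (J v w) 0 = 1 :=
    fun v hv => (hO v).symm.trans (hOone v hv)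
  obtain ⟨s, hs⟩ := exists_isUnitSuccessor hout (fun v _ => by linarith [hB v, hBzero v])
    ((hO vOUT).symm.trans hOout)
  have hdrop : ∀ v, v ≠ vOUT → φ (s v) + 1 ≤ φ v := fun v => hs.add_one_le hg0 hg1 hJ
  obtain ⟨p, hham, hφ, hps⟩ := exists_isHamiltonian_follows (φ := φ)
    (fun v hv => ⟨hs.adj v hv, by linarith [hdrop v hv]⟩) vIN
    fun w hwIN hwOUT => hs.exists_pred hanti (hKirchhoff w hwIN hwOUT) (hout w hwOUT)
  have hunit : ∀ d ∈ p.darts, φ d.fst - φ d.snd = 1 := by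
    refine p.sub_eq_one_of_add_length_eq φ (fun d hd => (hps d hd).2 ▸ hdrop _ (hps d hd).1) ?_
    rw [hham.length_eq, Nat.cast_pred (Fintype.card_pos_iff.2 ⟨vIN⟩), hφIN, hφOUT, hNcard]
    ring
  have hJ_path : ∀ d ∈ p.darts, J d.fst d.snd = 1 :=
    fun d hd => (hps d hd).2 ▸ hs.current_eq_one _ (hps d hd).1
  have hg_path : ∀ e ∈ p.edges, g e = 1 := by
    intro e he
    obtain ⟨d, hd, rfl⟩ := List.mem_map.1 he
    have := hJ_path d hd
    rwa [hJ, hunit d hd, mul_one] at this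
  have hg_off : ∀ e ∈ G.edgeSet, e ∉ p.edges → g e = 0 := fun e =>
    hs.eq_zero_of_not_mem_edges hJ hφ (fun d hd => (hps d hd).2) hham.mem_support
  refine ⟨fun e he => ?_, p, hham, fun e he => ⟨fun h1 => ?_, hg_path e⟩,
    fun d hd => ⟨hunit d hd, hJ_path d hd⟩⟩
  · by_cases hmem : e ∈ p.edges
    exacts [Or.inr (hg_path e hmem), Or.inl (hg_off e he hmem)]
  · exact not_not.1 fun hmem => zero_ne_one ((hg_off e he hmem).symm.trans h1)

/-- main theorem, analytic form: If the conductances lie in `[0,1]`, the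
potential satisfies the boundary conditions and the Kirchhoff equations at all non-terminal
vertices, and the penalties vanish, then the conductance configuration is `{0,1}`-valued,
the edges of conductance `1` form exactly the edge set of a Hamiltonian path from `vIN` to
`vOUT`, and along each arc of this path (oriented from `vIN` to `vOUT`, i.e. along each dart
of the walk) the potential drops by exactly `1` and the directed current equals `1`. -/
theorem global_minimizer_is_hamiltonian_path
    {V : Type*} [Fintype V] [DecidableEq V]
    (G : SimpleGraph V) [DecidableRel G.Adj]
    (N : ℕ) (hNcard : N = Fintype.card V) (hN3 : 3 ≤ N)
    (vIN vOUT : V) (hne : vIN ≠ vOUT)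
    (hdegIN : G.degree vIN = 1) (hdegOUT : G.degree vOUT = 1)
    -- conductance configuration, with values in [0,1] on every edge
    (g : Sym2 V → ℝ) (hg0 : ∀ e ∈ G.edgeSet, 0 ≤ g e) (hg1 : ∀ e ∈ G.edgeSet, g e ≤ 1)
    -- potential with the boundary conditions
    (φ : V → ℝ) (hφIN : φ vIN = (N : ℝ) - 1) (hφOUT : φ vOUT = 0)
    -- directed currents via Ohm's law
    (J : V → V → ℝ) (hJ : ∀ i j, J i j = g s(i, j) * (φ i - φ j))
    -- Kirchhoff equation at every non-terminal vertex
    (hKirchhoff : ∀ i, i ≠ vIN → i ≠ vOUT → ∑ j ∈ G.neighborFinset i, J i j = 0)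
    -- out-flow
    (O : V → ℝ) (hO : ∀ i, O i = ∑ j ∈ G.neighborFinset i, max (J i j) 0)
    -- local branching penalty (sum over unordered pairs of distinct neighbors)
    (B : V → ℝ)
    (hB : ∀ i, B i =
      (1 / 2) * ∑ p ∈ (G.neighborFinset i).offDiag, max (J i p.1) 0 * max (J i p.2) 0)
    -- vanishing of the penalties
    (hOout : O vOUT = 0) (hOone : ∀ i, i ≠ vOUT → O i = 1)
    (hBzero : ∀ i, B i = 0) :
    (∀ e ∈ G.edgeSet, g e = 0 ∨ g e = 1) ∧
    ∃ p : G.Walk vIN vOUT, p.IsHamiltonian ∧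
      (∀ e ∈ G.edgeSet, g e = 1 ↔ e ∈ p.edges) ∧
      (∀ d ∈ p.darts, φ d.fst - φ d.snd = 1 ∧ J d.fst d.snd = 1) :=
  global_minimizer_is_hamiltonian_path_general G N hNcard vIN vOUT g hg0 hg1 φ hφIN hφOUT J hJ
    hKirchhoff O hO B hB hOout hOone hBzero
end

section
/- Let V be a finite set with |V| = N ≥ 2, let in, out ∈ V be distinct, and let f : V → V satisfy: f(out) = out; out is the only periodic point of f (for every v and every n ≥ 1, f^[n](v) = v implies v = out); f(v) ≠ in for every v ∈ V; and the restriction of f to V \ {out} is injective. Then the map k ↦ f^[k](in) is a bijection from {0, 1, …, N−1} onto V, and f^[N−1](in) = out. -/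
/-- If `out` is a fixed point of `f` and its only periodic point, no point
maps to `vin`, and `f` is injective away from `out`, then iterating `f` starting from `vin`
enumerates all `N` vertices bijectively and reaches `out` after exactly `N - 1` steps. -/
theorem successor_map_enumerates_hamiltonian_path
    {V : Type*} [Fintype V]
    (N : ℕ) (hNcard : N = Fintype.card V) (hN2 : 2 ≤ N)
    (vin out : V) (hne : vin ≠ out)
    (f : V → V) (hfix : f out = out)
    (hper : ∀ (v : V) (n : ℕ), 1 ≤ n → f^[n] v = v → v = out)
    (hnotin : ∀ v : V, f v ≠ vin)
    (hinj : Set.InjOn f {v : V | v ≠ out}) :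
    Function.Bijective (fun k : Fin N => f^[(k : ℕ)] vin) ∧ f^[N - 1] vin = out := by
  classical
  -- every orbit reaches `out`
  have hex : ∀ v : V, ∃ k, f^[k] v = out := by
    intro v
    obtain ⟨a, b, hab, heq⟩ := Finite.exists_ne_map_eq_of_infinite (fun k : ℕ => f^[k] v)
    wlog h : a < b generalizing a b
    · exact this b a hab.symm heq.symm (by omega)
    refine ⟨a, hper _ (b - a) (by omega) ?_⟩
    calc f^[b - a] (f^[a] v) = f^[b] v := by
            rw [← Function.iterate_add_apply]; congr 1; omega
      _ = f^[a] v := heq.symm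
  have hS := hex vin
  set m := Nat.find hS with hmdef
  have hm : f^[m] vin = out := Nat.find_spec hS
  have hmin : ∀ j, j < m → f^[j] vin ≠ out := fun j hj => Nat.find_min hS hj
  have inj_le : ∀ a b, a ≤ m → b ≤ m → f^[a] vin = f^[b] vin → a = b := by
    intro a b ha hb h
    by_contra hne'
    wlog hlt : a < b generalizing a b
    · exact this b a hb ha h.symm (Ne.symm hne') (by omega)
    have hout : f^[a] vin = out := by
      apply hper _ (b - a) (by omega)
      rw [← Function.iterate_add_apply, show b - a + a = b by omega]
      exact h.symm
    exact hmin a (by omega) hout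
  set T : Finset V := (Finset.range (m + 1)).image (fun k => f^[k] vin) with hTdef
  have hmemT : ∀ v, v ∈ T ↔ ∃ k ≤ m, f^[k] vin = v := by
    intro v; simp [hTdef, Finset.mem_image, Nat.lt_succ_iff]
  have houtT : out ∈ T := (hmemT out).2 ⟨m, le_refl m, hm⟩
  have hclosed : ∀ v, v ∉ T → f v ∉ T := by
    intro v hv hfv
    obtain ⟨k, hk, hkeq⟩ := (hmemT (f v)).1 hfv
    have hk1 : 1 ≤ k := by
      rcases Nat.eq_zero_or_pos k with h0 | h
      · subst h0; simp only [Function.iterate_zero, id_eq] at hkeq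
        exact absurd hkeq.symm (hnotin v)
      · exact h
    have heq : f (f^[k - 1] vin) = f v := by
      have h' : f^[k - 1 + 1] vin = f v := by rw [show k - 1 + 1 = k by omega]; exact hkeq
      rwa [Function.iterate_succ_apply'] at h'
    have hvne : v ≠ out := fun h => hv (h ▸ houtT)
    have hne2 : f^[k - 1] vin ≠ out := hmin _ (by omega)
    have := hinj hne2 hvne heq
    exact hv ((hmemT v).2 ⟨k - 1, by omega, this⟩)
  have hall : ∀ v, v ∈ T := by
    intro v
    by_contra hv
    have hiter : ∀ k, f^[k] v ∉ T := by
      intro k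
      induction k with
      | zero => exact hv
      | succ n ih => rw [Function.iterate_succ_apply']; exact hclosed _ ih
    obtain ⟨k, hk⟩ := hex v
    exact hiter k (hk ▸ houtT)
  have hcard : T.card = m + 1 := by
    rw [hTdef, Finset.card_image_of_injOn, Finset.card_range]
    intro a ha b hb h
    exact inj_le a b (by simpa [Nat.lt_succ_iff] using ha)
      (by simpa [Nat.lt_succ_iff] using hb) h
  have hTuniv : T = Finset.univ := Finset.eq_univ_iff_forall.2 hall
  have hmN : m + 1 = N := by
    rw [hNcard, ← Finset.card_univ, ← hTuniv, hcard]
  have hinjF : Function.Injective (fun k : Fin N => f^[(k : ℕ)] vin) := by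
    intro a b h
    have ha : (a : ℕ) ≤ m := by have := a.isLt; omega
    have hb : (b : ℕ) ≤ m := by have := b.isLt; omega
    exact Fin.ext (inj_le a b ha hb h)
  refine ⟨(Fintype.bijective_iff_injective_and_card _).2 ⟨hinjF, by simp [hNcard]⟩, ?_⟩
  rw [show N - 1 = m by omega]
  exact hm
end

section
/- Let G₀ be a finite simple graph with distinct vertices hstart and hend, and let G be the graph obtained from G₀ by adjoining two new vertices vIN and vOUT together with the two new edges {vIN, hstart} and {hend, vOUT}. Then G₀ has a Hamiltonian path from hstart to hend if and only if G has a Hamiltonian path from vIN to vOUT. -/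
/-!
The new vertices vIN and vOUT each have a single neighbour, hstart and hend respectively, so a
Hamiltonian path from vIN to vOUT is forced to be vIN, hstart, …, hend, vOUT. Being a path, its
middle section avoids vIN and vOUT, hence lies in the copy of G₀ and pulls back to a Hamiltonian
path of G₀ from hstart to hend; conversely, such a path extends by the two new edges.
-/

namespace SimpleGraph

variable {V W : Type*}

theorem Walk.exists_eq_concat_of_ne {G : SimpleGraph V} {u v : V} (hne : u ≠ v)
    (p : G.Walk u v) : ∃ (x : V) (q : G.Walk u x) (h : G.Adj x v), p = q.concat h := by
  obtain ⟨_, h, p, rfl⟩ := p.exists_eq_cons_of_ne hne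
  exact exists_cons_eq_concat h p

theorem Walk.exists_map_eq_of_support_subset_range {G : SimpleGraph V} {G' : SimpleGraph W}
    (f : G ↪g G') {a b : V} (w : G'.Walk (f a) (f b)) (hw : ∀ x ∈ w.support, x ∈ Set.range f) :
    ∃ p : G.Walk a b, p.map f.toHom = w := by
  suffices key : ∀ {x y : W} (w : G'.Walk x y) (a b : V) (hx : f a = x) (hy : f b = y),
      (∀ x ∈ w.support, x ∈ Set.range f) → ∃ p : G.Walk a b, (p.map f.toHom).copy hx hy = w from
    key w a b rfl rfl hw
  intro x y w
  induction w with
  | nil =>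
    rintro a b rfl hb -
    obtain rfl := f.injective hb
    exact ⟨.nil, rfl⟩
  | cons h w ih =>
    rintro a b rfl rfl hw
    obtain ⟨c, rfl⟩ := hw _ (w.start_mem_support.tail _)
    obtain ⟨p, hp⟩ := ih c b rfl rfl fun x hx => hw x (hx.tail _)
    exact ⟨.cons (f.map_adj_iff.mp h) p, by simpa using hp⟩

/-- `Sum.inr false` is the new vertex vIN and `Sum.inr true` is vOUT. -/
def addTerminals (G₀ : SimpleGraph V) (s t : V) : SimpleGraph (V ⊕ Bool) :=
  fromRel fun x y =>
    (∃ a b : V, x = Sum.inl a ∧ y = Sum.inl b ∧ G₀.Adj a b) ∨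
    (x = Sum.inr false ∧ y = Sum.inl s) ∨
    (x = Sum.inl t ∧ y = Sum.inr true)

variable {G₀ : SimpleGraph V} {s t : V}

@[simp]
theorem addTerminals_adj_inl_inl {a b : V} :
    (G₀.addTerminals s t).Adj (.inl a) (.inl b) ↔ G₀.Adj a b := by
  simp +contextual [addTerminals, G₀.adj_comm b a, G₀.ne_of_adj]

@[simp]
theorem addTerminals_adj_inr_false {x : V ⊕ Bool} :
    (G₀.addTerminals s t).Adj (.inr false) x ↔ x = .inl s := by
  simp +contextual [addTerminals]

@[simp]
theorem addTerminals_adj_inr_true {x : V ⊕ Bool} :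
    (G₀.addTerminals s t).Adj x (.inr true) ↔ x = .inl t := by
  simp +contextual [addTerminals]

/-- Reducible so that `addTerminalsEmbedding G₀ s t s` unfolds to `Sum.inl s` for `rw` and `simp`
in the lemmas about `Walk.addTerminals`. -/
abbrev addTerminalsEmbedding (G₀ : SimpleGraph V) (s t : V) : G₀ ↪g G₀.addTerminals s t where
  toEmbedding := ⟨Sum.inl, Sum.inl_injective⟩
  map_rel_iff' := addTerminals_adj_inl_inl

def Walk.addTerminals (p : G₀.Walk s t) : (G₀.addTerminals s t).Walk (.inr false) (.inr true) :=
  .cons (addTerminals_adj_inr_false.mpr rfl)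
    ((p.map (addTerminalsEmbedding G₀ s t).toHom).concat (addTerminals_adj_inr_true.mpr rfl))

theorem Walk.support_addTerminals (p : G₀.Walk s t) :
    p.addTerminals.support = .inr false :: (p.support.map .inl ++ [.inr true]) := by
  rw [Walk.addTerminals, support_cons, support_concat, support_map]
  rfl

theorem Walk.isHamiltonian_addTerminals_iff [DecidableEq V] (p : G₀.Walk s t) :
    p.addTerminals.IsHamiltonian ↔ p.IsHamiltonian := by
  simp [IsHamiltonian, support_addTerminals, Sum.forall, List.count_eq_zero,
    List.count_map_of_injective _ _ Sum.inl_injective]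

theorem Walk.IsPath.exists_addTerminals_eq
    {q : (G₀.addTerminals s t).Walk (.inr false) (.inr true)} (hq : q.IsPath) :
    ∃ p : G₀.Walk s t, p.addTerminals = q := by
  obtain ⟨_, h₀, q, rfl⟩ := q.exists_eq_cons_of_ne (by simp)
  obtain rfl := addTerminals_adj_inr_false.mp h₀
  obtain ⟨_, w, h₁, rfl⟩ := q.exists_eq_concat_of_ne (by simp)
  obtain rfl := addTerminals_adj_inr_true.mp h₁
  have hnodup := hq.support_nodup
  simp only [support_cons, support_concat, List.nodup_cons, List.nodup_append,
    List.mem_append] at hnodup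
  have hw : ∀ x ∈ w.support, x ∈ Set.range Sum.inl := by
    rintro (x | _ | _) hx <;> simp_all
  obtain ⟨p, rfl⟩ := w.exists_map_eq_of_support_subset_range (addTerminalsEmbedding G₀ s t) hw
  exact ⟨p, rfl⟩

end SimpleGraph

theorem augmented_hamiltonian_path_iff_general
    {V : Type*} [DecidableEq V]
    (G₀ : SimpleGraph V) (hstart hend : V)
    (G : SimpleGraph (V ⊕ Bool))
    (hG : G = SimpleGraph.fromRel (fun x y =>
      (∃ a b : V, x = Sum.inl a ∧ y = Sum.inl b ∧ G₀.Adj a b) ∨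
      (x = Sum.inr false ∧ y = Sum.inl hstart) ∨
      (x = Sum.inl hend ∧ y = Sum.inr true))) :
    (∃ p : G₀.Walk hstart hend, p.IsHamiltonian) ↔
    (∃ q : G.Walk (Sum.inr false) (Sum.inr true), q.IsHamiltonian) := by
  obtain rfl : G = G₀.addTerminals hstart hend := hG
  constructor
  · rintro ⟨p, hp⟩
    exact ⟨p.addTerminals, p.isHamiltonian_addTerminals_iff.mpr hp⟩
  · rintro ⟨q, hq⟩
    obtain ⟨p, rfl⟩ := hq.isPath.exists_addTerminals_eq
    exact ⟨p, p.isHamiltonian_addTerminals_iff.mp hq⟩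

/-- Let `G` be the graph obtained from `G₀` by adjoining two new vertices
`vIN = Sum.inr false` and `vOUT = Sum.inr true` together with the two new edges
`{vIN, hstart}` and `{hend, vOUT}`. Then `G₀` has a Hamiltonian path from `hstart` to `hend`
iff `G` has a Hamiltonian path from `vIN` to `vOUT`. -/
theorem augmented_hamiltonian_path_iff
    {V : Type*} [Fintype V] [DecidableEq V]
    (G₀ : SimpleGraph V) (hstart hend : V) (hne : hstart ≠ hend)
    (G : SimpleGraph (V ⊕ Bool))
    (hG : G = SimpleGraph.fromRel (fun x y =>
      (∃ a b : V, x = Sum.inl a ∧ y = Sum.inl b ∧ G₀.Adj a b) ∨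
      (x = Sum.inr false ∧ y = Sum.inl hstart) ∨
      (x = Sum.inl hend ∧ y = Sum.inr true))) :
    (∃ p : G₀.Walk hstart hend, p.IsHamiltonian) ↔
    (∃ q : G.Walk (Sum.inr false) (Sum.inr true), q.IsHamiltonian) :=
  augmented_hamiltonian_path_iff_general G₀ hstart hend G hG
end
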